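/- arXiv:2412.13473 — 4 statements merged into one kernel-verified Lean document; each statement's English description precedes it below -/
import Mathlib

section
/- Under Assumption 1, for every z ∈ E with ‖z‖ ≤ Z, every integer j ≥ 1, and all step sizes ρ, η ∈ [ρ_l, ρ_u] with ρ ≤ η, one has ‖g^j(z, ρ) − g^j(z, η)‖ ≤ (η − ρ)·D(ρ)^j·LZ/β. -/
/-!
Convexity together with an `L`-Lipschitz gradient gives cocoercivity
`‖∇f a - ∇f b‖² ≤ L ⟪∇f a - ∇f b, a - b⟫` (Baillon–Haddad), and expanding the square shows
that one gradient step with step size `ρ` is `D(ρ) = max 1 (Lρ - 1)`-Lipschitz. Two runs with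
step sizes `ρ ≤ η` from the same start therefore drift apart by at most
`D(ρ) · (previous gap) + (η - ρ) ‖∇f (x_m)‖` per step, where `x_m` is the `η`-run and
`‖∇f (x_m)‖ ≤ L ‖x_m‖ ≤ L (1 - β)^m Z` by the contraction assumption. Unrolling this recursion
and summing the geometric series `∑ (1 - β)^m ≤ 1/β` gives the bound.
-/

/-- `gdIter f' ρ j z` is the `j`-fold iterate `g^j(z, ρ)` of the one-step
gradient-descent map `g(z, ρ) = z - ρ • f' z`. -/
noncomputable def gdIter {E : Type*} [NormedAddCommGroup E] [Module ℝ E]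
    (f' : E → E) (ρ : ℝ) : ℕ → E → E
  | 0, z => z
  | n + 1, z => gdIter f' ρ n z - ρ • f' (gdIter f' ρ n z)

open Set Finset AffineMap
open scoped RealInnerProductSpace

theorem gdIter_succ {E : Type*} [NormedAddCommGroup E] [Module ℝ E] (f' : E → E) (ρ : ℝ)
    (n : ℕ) (z : E) : gdIter f' ρ (n + 1) z = gdIter f' ρ n z - ρ • f' (gdIter f' ρ n z) :=
  rfl

theorem norm_gdIter_le_pow_mul {E : Type*} [NormedAddCommGroup E] [Module ℝ E] {f' : E → E}
    {ρ c : ℝ} (hc : 0 ≤ c) (h : ∀ z, ‖z - ρ • f' z‖ ≤ c * ‖z‖) (n : ℕ) (z : E) :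
    ‖gdIter f' ρ n z‖ ≤ c ^ n * ‖z‖ := by
  induction n with
  | zero => simp [gdIter]
  | succ n ih =>
    calc ‖gdIter f' ρ (n + 1) z‖ ≤ c * ‖gdIter f' ρ n z‖ := h _
      _ ≤ c * (c ^ n * ‖z‖) := by gcongr
      _ = c ^ (n + 1) * ‖z‖ := by ring

theorem le_mul_pow_mul_geom_sum_of_le_mul_add {e : ℕ → ℝ} {D c r : ℝ} (hD : 1 ≤ D)
    (hc : 0 ≤ c) (hr : 0 ≤ r) (h0 : e 0 ≤ 0) (hstep : ∀ m, e (m + 1) ≤ D * e m + c * r ^ m)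
    (n : ℕ) : e n ≤ c * D ^ n * ∑ k ∈ range n, r ^ k := by
  induction n with
  | zero => simpa using h0
  | succ m ih =>
    have hDm : c * r ^ m ≤ c * D ^ (m + 1) * r ^ m :=
      calc c * r ^ m = c * 1 * r ^ m := by ring
        _ ≤ c * D ^ (m + 1) * r ^ m := by gcongr; exact one_le_pow₀ hD
    calc e (m + 1) ≤ D * e m + c * r ^ m := hstep m
      _ ≤ D * (c * D ^ m * ∑ k ∈ range m, r ^ k) + c * D ^ (m + 1) * r ^ m := by
        gcongr
      _ = c * D ^ (m + 1) * ∑ k ∈ range (m + 1), r ^ k := by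
        rw [sum_range_succ]; ring

section
variable {E : Type*} [NormedAddCommGroup E] [InnerProductSpace ℝ E]

theorem norm_sub_smul_le_of_sq_norm_le_mul_inner {L ρ : ℝ} (hL : 0 < L) (hρ : 0 ≤ ρ) {u w : E}
    (h : ‖u‖ ^ 2 ≤ L * ⟪u, w⟫) : ‖w - ρ • u‖ ≤ max 1 (L * ρ - 1) * ‖w‖ := by
  have hinner : 0 ≤ ⟪u, w⟫ := nonneg_of_mul_nonneg_right (h.trans' (sq_nonneg _)) hL
  have hu : ‖u‖ ≤ L * ‖w‖ := by
    nlinarith [mul_le_mul_of_nonneg_left (real_inner_le_norm u w) hL.le,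
      mul_nonneg hL.le (norm_nonneg w)]
  have hexpand : ‖w - ρ • u‖ ^ 2 = ‖w‖ ^ 2 - 2 * ρ * ⟪u, w⟫ + ρ ^ 2 * ‖u‖ ^ 2 := by
    rw [norm_sub_sq_real, real_inner_smul_right, norm_smul, Real.norm_of_nonneg hρ,
      real_inner_comm]
    ring
  rw [← sq_le_sq₀ (norm_nonneg _) (by positivity), hexpand]
  rcases le_total (L * ρ) 2 with hsmall | hlarge
  · rw [max_eq_left (by linarith)]
    nlinarith [mul_le_mul_of_nonneg_left h (sq_nonneg ρ), mul_nonneg hρ hinner]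
  · rw [max_eq_right (by linarith)]
    refine le_of_mul_le_mul_left ?_ hL
    nlinarith [mul_le_mul_of_nonneg_left (pow_le_pow_left₀ (norm_nonneg u) hu 2)
      (mul_nonneg hρ (sub_nonneg.2 hlarge)), mul_le_mul_of_nonneg_left h hρ]

variable [CompleteSpace E] {f : E → ℝ} {f' : E → E}

theorem HasGradientAt.hasDerivAt_comp_lineMap {g x y : E} {t : ℝ}
    (h : HasGradientAt f g (lineMap x y t)) :
    HasDerivAt (fun s : ℝ => f (lineMap x y s)) ⟪g, y - x⟫ t := by
  simpa [InnerProductSpace.toDual_apply_apply, Function.comp_def] using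
    h.hasFDerivAt.comp_hasDerivAt t hasDerivAt_lineMap

theorem ConvexOn.add_inner_le_of_hasGradientAt (hf : ConvexOn ℝ univ f) {g x : E}
    (hg : HasGradientAt f g x) (y : E) : f x + ⟪g, y - x⟫ ≤ f y := by
  have hφ : ConvexOn ℝ univ (fun s : ℝ => f (lineMap x y s)) := by
    have := hf.comp_affineMap (lineMap x y)
    rwa [preimage_univ] at this
  have hderiv : HasDerivAt (fun s : ℝ => f (lineMap x y s)) ⟪g, y - x⟫ 0 :=
    HasGradientAt.hasDerivAt_comp_lineMap (by simpa using hg)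
  have := hφ.le_slope_of_hasDerivAt (mem_univ 0) (mem_univ 1) zero_lt_one hderiv
  simp only [slope_def_field, lineMap_apply_zero, lineMap_apply_one] at this
  linarith

theorem le_add_inner_add_sq_of_lipschitz_gradient {L : ℝ}
    (hdiff : ∀ x, HasGradientAt f (f' x) x)
    (hlip : ∀ z₁ z₂, ‖f' z₁ - f' z₂‖ ≤ L * ‖z₁ - z₂‖) (x y : E) :
    f y ≤ f x + ⟪f' x, y - x⟫ + L / 2 * ‖y - x‖ ^ 2 := by
  set φ : ℝ → ℝ := fun t => f (lineMap x y t) - t * ⟪f' x, y - x⟫ - L / 2 * t ^ 2 * ‖y - x‖ ^ 2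
  have hφ : ∀ t, HasDerivAt φ
      (⟪f' (lineMap x y t) - f' x, y - x⟫ - L * t * ‖y - x‖ ^ 2) t := by
    intro t
    have h := (((hdiff (lineMap x y t)).hasDerivAt_comp_lineMap (x := x)).sub
      ((hasDerivAt_id t).mul_const ⟪f' x, y - x⟫)).sub
      (((hasDerivAt_pow 2 t).const_mul (L / 2)).mul_const (‖y - x‖ ^ 2))
    exact h.congr_deriv (by rw [inner_sub_left]; ring)
  have hφ' : ∀ t ∈ interior (Icc (0 : ℝ) 1), deriv φ t ≤ 0 := by
    intro t ht
    rw [interior_Icc] at ht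
    have hsub : lineMap x y t - x = t • (y - x) := lineMap_vsub_left x y t
    have : ⟪f' (lineMap x y t) - f' x, y - x⟫ ≤ L * t * ‖y - x‖ ^ 2 :=
      calc ⟪f' (lineMap x y t) - f' x, y - x⟫
          ≤ ‖f' (lineMap x y t) - f' x‖ * ‖y - x‖ := real_inner_le_norm _ _
        _ ≤ L * ‖lineMap x y t - x‖ * ‖y - x‖ := by gcongr; exact hlip _ _
        _ = L * t * ‖y - x‖ ^ 2 := by
          rw [hsub, norm_smul, Real.norm_of_nonneg ht.1.le]; ring
    rw [(hφ t).deriv]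
    linarith
  have := (convex_Icc (0 : ℝ) 1).image_sub_le_mul_sub_of_deriv_le
    (fun t _ => (hφ t).continuousAt.continuousWithinAt)
    (fun t _ => (hφ t).differentiableAt.differentiableWithinAt) hφ'
    0 (left_mem_Icc.2 zero_le_one) 1 (right_mem_Icc.2 zero_le_one) zero_le_one
  simp only [φ, lineMap_apply_zero, lineMap_apply_one] at this
  linarith

theorem add_inner_add_sq_norm_sub_le_of_lipschitz_gradient {L : ℝ} (hL : 0 < L)
    (hconv : ConvexOn ℝ univ f) (hdiff : ∀ x, HasGradientAt f (f' x) x)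
    (hlip : ∀ z₁ z₂, ‖f' z₁ - f' z₂‖ ≤ L * ‖z₁ - z₂‖) (p q : E) :
    f q + ⟪f' q, p - q⟫ + (2 * L)⁻¹ * ‖f' p - f' q‖ ^ 2 ≤ f p := by
  set u := f' p - f' q
  -- evaluate the convexity bound at `q` and the smoothness bound at `p` at `p - L⁻¹ • u`
  have hconvex := hconv.add_inner_le_of_hasGradientAt (hdiff q) (p - L⁻¹ • u)
  have hsmooth := le_add_inner_add_sq_of_lipschitz_gradient hdiff hlip p (p - L⁻¹ • u)
  have hyq : p - L⁻¹ • u - q = (p - q) - L⁻¹ • u := by abel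
  have hyp : p - L⁻¹ • u - p = -(L⁻¹ • u) := by abel
  rw [hyq, inner_sub_right, real_inner_smul_right] at hconvex
  rw [hyp, inner_neg_right, real_inner_smul_right, norm_neg, norm_smul,
    Real.norm_of_nonneg (inv_nonneg.2 hL.le)] at hsmooth
  have hu : ⟪f' p, u⟫ - ⟪f' q, u⟫ = ‖u‖ ^ 2 := by
    rw [← inner_sub_left, real_inner_self_eq_norm_sq]
  have hL' : L ≠ 0 := hL.ne'
  have hquad : L / 2 * (L⁻¹ * ‖u‖) ^ 2 = (2 * L)⁻¹ * ‖u‖ ^ 2 := by field_simp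
  have hlin : L⁻¹ * ⟪f' p, u⟫ - L⁻¹ * ⟪f' q, u⟫ = 2 * ((2 * L)⁻¹ * ‖u‖ ^ 2) := by
    rw [← mul_sub, hu]; field_simp
  linarith

theorem sq_norm_sub_le_mul_inner_of_lipschitz_gradient {L : ℝ} (hL : 0 < L)
    (hconv : ConvexOn ℝ univ f) (hdiff : ∀ x, HasGradientAt f (f' x) x)
    (hlip : ∀ z₁ z₂, ‖f' z₁ - f' z₂‖ ≤ L * ‖z₁ - z₂‖) (a b : E) :
    ‖f' a - f' b‖ ^ 2 ≤ L * ⟪f' a - f' b, a - b⟫ := by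
  have hab := add_inner_add_sq_norm_sub_le_of_lipschitz_gradient hL hconv hdiff hlip a b
  have hba := add_inner_add_sq_norm_sub_le_of_lipschitz_gradient hL hconv hdiff hlip b a
  rw [norm_sub_rev, ← neg_sub a b, inner_neg_right] at hba
  have hsum : L⁻¹ * ‖f' a - f' b‖ ^ 2 ≤ ⟪f' a - f' b, a - b⟫ := by
    rw [inner_sub_left, show L⁻¹ = 2 * (2 * L)⁻¹ by field_simp, mul_assoc]
    linarith
  calc ‖f' a - f' b‖ ^ 2 = L * (L⁻¹ * ‖f' a - f' b‖ ^ 2) := by field_simp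
    _ ≤ L * ⟪f' a - f' b, a - b⟫ := by gcongr

theorem norm_gradient_step_sub_le {L ρ : ℝ} (hL : 0 < L) (hρ : 0 ≤ ρ)
    (hconv : ConvexOn ℝ univ f) (hdiff : ∀ x, HasGradientAt f (f' x) x)
    (hlip : ∀ z₁ z₂, ‖f' z₁ - f' z₂‖ ≤ L * ‖z₁ - z₂‖) (a b : E) :
    ‖(a - ρ • f' a) - (b - ρ • f' b)‖ ≤ max 1 (L * ρ - 1) * ‖a - b‖ := by
  rw [show (a - ρ • f' a) - (b - ρ • f' b) = (a - b) - ρ • (f' a - f' b) by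
    rw [smul_sub]; abel]
  exact norm_sub_smul_le_of_sq_norm_le_mul_inner hL hρ
    (sq_norm_sub_le_mul_inner_of_lipschitz_gradient hL hconv hdiff hlip a b)

theorem norm_gdIter_succ_sub_le {L ρ η : ℝ} (hL : 0 < L) (hρ : 0 ≤ ρ) (hρη : ρ ≤ η)
    (hconv : ConvexOn ℝ univ f) (hdiff : ∀ x, HasGradientAt f (f' x) x)
    (hlip : ∀ z₁ z₂, ‖f' z₁ - f' z₂‖ ≤ L * ‖z₁ - z₂‖) (m : ℕ) (z : E) :
    ‖gdIter f' ρ (m + 1) z - gdIter f' η (m + 1) z‖ ≤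
      max 1 (L * ρ - 1) * ‖gdIter f' ρ m z - gdIter f' η m z‖ +
        (η - ρ) * ‖f' (gdIter f' η m z)‖ := by
  set a := gdIter f' ρ m z
  set b := gdIter f' η m z
  have hsplit : gdIter f' ρ (m + 1) z - gdIter f' η (m + 1) z =
      ((a - ρ • f' a) - (b - ρ • f' b)) + (η - ρ) • f' b := by
    rw [gdIter_succ, gdIter_succ, sub_smul]; abel
  rw [hsplit]
  refine (norm_add_le _ _).trans (add_le_add ?_ ?_)
  · exact norm_gradient_step_sub_le hL hρ hconv hdiff hlip a b
  · rw [norm_smul, Real.norm_of_nonneg (sub_nonneg.2 hρη)]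

end

theorem gd_iteration_error_estimation_general
    {E : Type*} [NormedAddCommGroup E] [InnerProductSpace ℝ E] [CompleteSpace E]
    (f : E → ℝ) (f' : E → E) (L : ℝ) (hL : 0 < L)
    (hconv : ConvexOn ℝ Set.univ f)
    (hdiff : ∀ x : E, HasGradientAt f (f' x) x)
    (hlip : ∀ z₁ z₂ : E, ‖f' z₁ - f' z₂‖ ≤ L * ‖z₁ - z₂‖)
    (ρl ρu : ℝ) (hρl : 0 < ρl)
    (β : ℝ) (hβ : β ∈ Set.Ioo (0 : ℝ) 1)
    (hcontract : ∀ z : E, ∀ ρ ∈ Set.Icc ρl ρu, ‖z - ρ • f' z‖ ≤ (1 - β) * ‖z‖)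
    (hgrad0 : f' 0 = 0)
    (Z : ℝ) :
    ∀ z : E, ‖z‖ ≤ Z → ∀ j : ℕ, 1 ≤ j →
      ∀ ρ ∈ Set.Icc ρl ρu, ∀ η ∈ Set.Icc ρl ρu, ρ ≤ η →
        ‖gdIter f' ρ j z - gdIter f' η j z‖ ≤
          (η - ρ) * (max 1 (L * ρ - 1)) ^ j * L * Z / β := by
  intro z hz j _ ρ hρ η hη hρη
  obtain ⟨hβ0, hβ1⟩ := hβ
  have hρ0 : 0 ≤ ρ := (hρl.trans_le hρ.1).le
  have hc : 0 ≤ (η - ρ) * L * Z :=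
    mul_nonneg (mul_nonneg (sub_nonneg.2 hρη) hL.le) ((norm_nonneg z).trans hz)
  have hgrad : ∀ x, ‖f' x‖ ≤ L * ‖x‖ := fun x => by simpa [hgrad0] using hlip x 0
  have hstep : ∀ m, ‖gdIter f' ρ (m + 1) z - gdIter f' η (m + 1) z‖ ≤
      max 1 (L * ρ - 1) * ‖gdIter f' ρ m z - gdIter f' η m z‖ +
        (η - ρ) * L * Z * (1 - β) ^ m := by
    intro m
    have hdecay := norm_gdIter_le_pow_mul (sub_nonneg.2 hβ1.le) (hcontract · η hη) m z
    calc _ ≤ _ := norm_gdIter_succ_sub_le hL hρ0 hρη hconv hdiff hlip m z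
      _ ≤ max 1 (L * ρ - 1) * ‖gdIter f' ρ m z - gdIter f' η m z‖ +
          (η - ρ) * (L * ((1 - β) ^ m * Z)) := by
        gcongr _ + _ * ?_
        exact (hgrad _).trans (by gcongr; exact hdecay.trans (by gcongr))
      _ = _ := by ring
  have hgap := le_mul_pow_mul_geom_sum_of_le_mul_add
    (e := fun m => ‖gdIter f' ρ m z - gdIter f' η m z‖) (le_max_left 1 (L * ρ - 1))
    hc (sub_nonneg.2 hβ1.le) (by simp [gdIter]) hstep j
  have hgeom : ∑ k ∈ range j, (1 - β) ^ k ≤ β⁻¹ := by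
    rw [range_eq_Ico]
    simpa using geom_sum_Ico_le_of_lt_one (m := 0) (n := j)
      (sub_nonneg.2 hβ1.le) (by linarith)
  calc _ ≤ _ := hgap
    _ ≤ (η - ρ) * L * Z * max 1 (L * ρ - 1) ^ j * β⁻¹ := by
      gcongr
    _ = _ := by ring

/-- Error estimation of iteration processes (Gupta–Roughgarden, Lemma 1):
under Assumption 1, `‖g^j(z, ρ) - g^j(z, η)‖ ≤ (η - ρ) D(ρ)^j L Z / β`. -/
theorem gd_iteration_error_estimation
    {E : Type*} [NormedAddCommGroup E] [InnerProductSpace ℝ E] [CompleteSpace E]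
    (f : E → ℝ) (f' : E → E) (L : ℝ) (hL : 0 < L)
    (hconv : ConvexOn ℝ Set.univ f)
    (hdiff : ∀ x : E, HasGradientAt f (f' x) x)
    (hlip : ∀ z₁ z₂ : E, ‖f' z₁ - f' z₂‖ ≤ L * ‖z₁ - z₂‖)
    (ρl ρu : ℝ) (hρl : 0 < ρl) (hρlu : ρl ≤ ρu)
    (β : ℝ) (hβ : β ∈ Set.Ioo (0 : ℝ) 1)
    (hcontract : ∀ z : E, ∀ ρ ∈ Set.Icc ρl ρu, ‖z - ρ • f' z‖ ≤ (1 - β) * ‖z‖)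
    (hgrad0 : f' 0 = 0)
    (ν Z : ℝ) (hν : 0 < ν) (hνLZ : ν < L * Z)
    (z₀ : E) (hz₀ν : ν < ‖z₀‖) (hz₀Z : ‖z₀‖ ≤ Z) :
    ∀ z : E, ‖z‖ ≤ Z → ∀ j : ℕ, 1 ≤ j →
      ∀ ρ ∈ Set.Icc ρl ρu, ∀ η ∈ Set.Icc ρl ρu, ρ ≤ η →
        ‖gdIter f' ρ j z - gdIter f' η j z‖ ≤
          (η - ρ) * (max 1 (L * ρ - 1)) ^ j * L * Z / β :=
  gd_iteration_error_estimation_general f f' L hL hconv hdiff hlip ρl ρu hρl β hβ hcontract hgrad0 Z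
end

section
/- Let ρ > 0 and η ≥ 0. For all w, w', y, y' ∈ E, ‖g(w, w', ρ, η) − g(y, y', ρ, η)‖ ≤ (D(ρ) + η)·‖w − y‖ + η·‖w' − y'‖. -/
/-!
For convex `L`-smooth `f` the gradient is co-coercive (Baillon–Haddad):
`‖∇f w - ∇f y‖² ≤ L ⟪∇f w - ∇f y, w - y⟫`. This comes from adding, for `(a, b) = (w, y)` and
`(y, w)`, the bound `f a + ⟪∇f a, b - a⟫ + ‖∇f b - ∇f a‖² / (2L) ≤ f b`, obtained by evaluating
`f` at the gradient step `z = b - L⁻¹ (∇f b - ∇f a)`, which lies above the tangent plane at `a`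
and below the quadratic upper model (descent lemma) at `b`. Expanding `‖d - ρ G‖²` with
`d = w - y`, `G = ∇f w - ∇f y` and co-coercivity gives `‖d - ρ G‖ ≤ max 1 (Lρ - 1) ‖d‖`; the
momentum terms `η (w - w')`, `η (y - y')` are then handled by the triangle inequality.
-/

open InnerProductSpace Set
open scoped RealInnerProductSpace

section Gradient

variable {E : Type*} [NormedAddCommGroup E] [InnerProductSpace ℝ E] [CompleteSpace E]
  {f : E → ℝ} {f' : E → E}

theorem HasGradientAt.hasDerivAt_comp_add_smul {x v : E} {t : ℝ} {g : E}
    (hf : HasGradientAt f g (x + t • v)) :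
    HasDerivAt (fun s : ℝ => f (x + s • v)) ⟪g, v⟫ t := by
  have hline : HasDerivAt (fun s : ℝ => x + s • v) v t := by
    simpa using ((hasDerivAt_id t).smul_const v).const_add x
  simpa [Function.comp_def] using hf.hasFDerivAt.comp_hasDerivAt t hline

theorem ConvexOn.add_inner_sub_le (hconv : ConvexOn ℝ univ f)
    (hdiff : ∀ x, HasGradientAt f (f' x) x) (x z : E) :
    f x + ⟪f' x, z - x⟫ ≤ f z := by
  have hline : (f ∘ AffineMap.lineMap x z) = fun t : ℝ => f (x + t • (z - x)) := by
    ext t; simp [AffineMap.lineMap_apply_module', add_comm]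
  have hderiv : HasDerivAt (fun t : ℝ => f (x + t • (z - x))) ⟪f' x, z - x⟫ 0 :=
    HasGradientAt.hasDerivAt_comp_add_smul (by simpa using hdiff x)
  have hslope := (hconv.comp_affineMap (AffineMap.lineMap x z)).le_slope_of_hasDerivAt
    (mem_univ 0) (mem_univ 1) one_pos (hline ▸ hderiv)
  simp only [slope_def_field, Function.comp_apply, AffineMap.lineMap_apply_module', one_smul,
    sub_add_cancel, zero_smul, zero_add, sub_zero, div_one] at hslope
  linarith

theorem le_add_inner_sub_add_sq_norm {L : ℝ} (hdiff : ∀ x, HasGradientAt f (f' x) x)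
    (hlip : ∀ z₁ z₂ : E, ‖f' z₁ - f' z₂‖ ≤ L * ‖z₁ - z₂‖) (x z : E) :
    f z ≤ f x + ⟪f' x, z - x⟫ + L / 2 * ‖z - x‖ ^ 2 := by
  set v := z - x
  set φ : ℝ → ℝ := fun t => f (x + t • v) - t * ⟪f' x, v⟫ - L / 2 * t ^ 2 * ‖v‖ ^ 2
  have hφ : ∀ t : ℝ, HasDerivAt φ (⟪f' (x + t • v) - f' x, v⟫ - L * t * ‖v‖ ^ 2) t := by
    intro t
    have := (((hdiff (x + t • v)).hasDerivAt_comp_add_smul).sub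
      ((hasDerivAt_id t).mul_const ⟪f' x, v⟫)).sub
      (((hasDerivAt_pow 2 t).const_mul (L / 2)).mul_const (‖v‖ ^ 2))
    refine this.congr_deriv ?_
    rw [inner_sub_left, show (2 - 1 : ℕ) = 1 from rfl]; push_cast; ring
  have hanti : AntitoneOn φ (Icc 0 1) := by
    refine antitoneOn_of_deriv_nonpos (convex_Icc 0 1)
      (fun t _ => (hφ t).continuousAt.continuousWithinAt)
      (fun t _ => (hφ t).differentiableAt.differentiableWithinAt) fun t ht => ?_
    rw [interior_Icc] at ht
    have hcs := real_inner_le_norm (f' (x + t • v) - f' x) v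
    have hgrad : ‖f' (x + t • v) - f' x‖ ≤ L * (t * ‖v‖) := by
      simpa [norm_smul, abs_of_pos ht.1] using hlip (x + t • v) x
    rw [(hφ t).deriv]
    nlinarith [norm_nonneg v]
  have := hanti (left_mem_Icc.mpr zero_le_one) (right_mem_Icc.mpr zero_le_one) zero_le_one
  simp only [φ, v, zero_smul, add_zero, one_smul, add_sub_cancel, zero_mul, one_mul, one_pow,
    mul_one, sub_zero, ne_eq, OfNat.ofNat_ne_zero, not_false_eq_true, zero_pow, mul_zero,
    tsub_le_iff_right] at this
  linarith

theorem ConvexOn.add_inner_sub_add_sq_norm_le {L : ℝ} (hL : 0 < L) (hconv : ConvexOn ℝ univ f)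
    (hdiff : ∀ x, HasGradientAt f (f' x) x)
    (hlip : ∀ z₁ z₂ : E, ‖f' z₁ - f' z₂‖ ≤ L * ‖z₁ - z₂‖) (a b : E) :
    f a + ⟪f' a, b - a⟫ + (2 * L)⁻¹ * ‖f' b - f' a‖ ^ 2 ≤ f b := by
  set G := f' b - f' a
  set z := b - L⁻¹ • G
  have hlower := hconv.add_inner_sub_le hdiff a z
  have hupper := le_add_inner_sub_add_sq_norm hdiff hlip b z
  have hzb : z - b = -(L⁻¹ • G) := by simp [z]
  have hsplit : ⟪f' a, z - a⟫ = ⟪f' a, b - a⟫ + ⟪f' a, z - b⟫ := by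
    rw [← inner_add_right]; congr 1; abel
  have hinner : ⟪f' b, z - b⟫ - ⟪f' a, z - b⟫ = -(L⁻¹ * ‖G‖ ^ 2) := by
    rw [← inner_sub_left, hzb, inner_neg_right, real_inner_smul_right, real_inner_self_eq_norm_sq]
  have hnorm : L / 2 * ‖z - b‖ ^ 2 = (2 * L)⁻¹ * ‖G‖ ^ 2 := by
    rw [hzb, norm_neg, norm_smul_of_nonneg (inv_nonneg.mpr hL.le)]
    field_simp
  have hhalf : L⁻¹ * ‖G‖ ^ 2 = 2 * ((2 * L)⁻¹ * ‖G‖ ^ 2) := by field_simp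
  linarith

theorem ConvexOn.sq_norm_sub_le_mul_inner_sub {L : ℝ} (hL : 0 < L) (hconv : ConvexOn ℝ univ f)
    (hdiff : ∀ x, HasGradientAt f (f' x) x)
    (hlip : ∀ z₁ z₂ : E, ‖f' z₁ - f' z₂‖ ≤ L * ‖z₁ - z₂‖) (w y : E) :
    ‖f' w - f' y‖ ^ 2 ≤ L * ⟪f' w - f' y, w - y⟫ := by
  have hwy := hconv.add_inner_sub_add_sq_norm_le hL hdiff hlip w y
  have hyw := hconv.add_inner_sub_add_sq_norm_le hL hdiff hlip y w
  have hsum : ⟪f' w, y - w⟫ + ⟪f' y, w - y⟫ = -⟪f' w - f' y, w - y⟫ := by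
    rw [← neg_sub w y, inner_neg_right, inner_sub_left]; ring
  rw [norm_sub_rev] at hwy
  have hhalf : (2 * L)⁻¹ * ‖f' w - f' y‖ ^ 2 + (2 * L)⁻¹ * ‖f' w - f' y‖ ^ 2
      = L⁻¹ * ‖f' w - f' y‖ ^ 2 := by ring
  have key : L⁻¹ * ‖f' w - f' y‖ ^ 2 ≤ ⟪f' w - f' y, w - y⟫ := by linarith
  rwa [inv_mul_le_iff₀ hL] at key

end Gradient

theorem norm_sub_smul_le_max_mul_norm {E : Type*} [NormedAddCommGroup E] [InnerProductSpace ℝ E]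
    {L ρ : ℝ} (hL : 0 < L) (hρ : 0 ≤ ρ) {d G : E} (hG : ‖G‖ ^ 2 ≤ L * ⟪G, d⟫) :
    ‖d - ρ • G‖ ≤ max 1 (L * ρ - 1) * ‖d‖ := by
  have hinner : 0 ≤ ⟪G, d⟫ := by nlinarith [sq_nonneg ‖G‖]
  have hGd : ‖G‖ ≤ L * ‖d‖ := by
    have := mul_le_mul_of_nonneg_left (real_inner_le_norm G d) hL.le
    nlinarith [norm_nonneg G, mul_nonneg hL.le (norm_nonneg d)]
  have hsq : ‖d - ρ • G‖ ^ 2 = ‖d‖ ^ 2 - 2 * ρ * ⟪G, d⟫ + ρ ^ 2 * ‖G‖ ^ 2 := by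
    rw [norm_sub_sq_real, real_inner_smul_right, norm_smul_of_nonneg hρ, real_inner_comm]; ring
  refine le_of_pow_le_pow_left₀ two_ne_zero (by positivity) ?_
  rw [hsq, mul_pow]
  -- For `Lρ ≤ 2` co-coercivity absorbs `ρ²‖G‖²`; beyond that, `‖G‖ ≤ L‖d‖` bounds the excess.
  rcases le_or_gt (L * ρ) 2 with hsmall | hlarge
  · have : 1 ≤ max 1 (L * ρ - 1) ^ 2 := by nlinarith [le_max_left 1 (L * ρ - 1)]
    nlinarith [mul_le_mul_of_nonneg_left hG (sq_nonneg ρ), mul_nonneg hρ hinner, sq_nonneg ‖d‖]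
  · rw [max_eq_right (by linarith)]
    nlinarith [mul_le_mul_of_nonneg_left hG (by positivity : (0:ℝ) ≤ 2 * ρ),
      mul_le_mul_of_nonneg_left (pow_le_pow_left₀ (norm_nonneg G) hGd 2)
        (by nlinarith : (0:ℝ) ≤ ρ * (L * ρ - 2))]

/-- Lipschitz continuity of the conjugate-gradient update map (Lemma 3):
`g(z, z', ρ, η) = z - ρ∇f(z) - η(z - z')` satisfies
`‖g(w, w', ρ, η) - g(y, y', ρ, η)‖ ≤ (D(ρ) + η)‖w - y‖ + η‖w' - y'‖`. -/
theorem cg_one_step_lipschitz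
    {E : Type*} [NormedAddCommGroup E] [InnerProductSpace ℝ E] [CompleteSpace E]
    (f : E → ℝ) (f' : E → E) (L : ℝ) (hL : 0 < L)
    (hconv : ConvexOn ℝ Set.univ f)
    (hdiff : ∀ x : E, HasGradientAt f (f' x) x)
    (hlip : ∀ z₁ z₂ : E, ‖f' z₁ - f' z₂‖ ≤ L * ‖z₁ - z₂‖)
    (ρ η : ℝ) (hρ : 0 < ρ) (hη : 0 ≤ η) :
    ∀ w w' y y' : E,
      ‖(w - ρ • f' w - η • (w - w')) - (y - ρ • f' y - η • (y - y'))‖ ≤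
        (max 1 (L * ρ - 1) + η) * ‖w - y‖ + η * ‖w' - y'‖ := by
  intro w w' y y'
  have hstep : ‖(w - y) - ρ • (f' w - f' y)‖ ≤ max 1 (L * ρ - 1) * ‖w - y‖ :=
    norm_sub_smul_le_max_mul_norm hL hρ.le (hconv.sq_norm_sub_le_mul_inner_sub hL hdiff hlip w y)
  calc ‖(w - ρ • f' w - η • (w - w')) - (y - ρ • f' y - η • (y - y'))‖
      = ‖((w - y) - ρ • (f' w - f' y)) - η • (w - y) + η • (w' - y')‖ := by congr 1; module
    _ ≤ ‖(w - y) - ρ • (f' w - f' y)‖ + ‖η • (w - y)‖ + ‖η • (w' - y')‖ :=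
        (norm_add_le _ _).trans (by gcongr; exact norm_sub_le _ _)
    _ ≤ max 1 (L * ρ - 1) * ‖w - y‖ + η * ‖w - y‖ + η * ‖w' - y'‖ := by
        rw [norm_smul_of_nonneg hη, norm_smul_of_nonneg hη]; gcongr
    _ = (max 1 (L * ρ - 1) + η) * ‖w - y‖ + η * ‖w' - y'‖ := by ring
end

section
/- Let ρ₁ ∈ [ρ_l, ρ_u] ⊂ (0, ∞), η₁ ∈ [η_l, η_u] ⊂ (0, ∞), β ∈ (0, 1), L > 0, Z > 0, ν with 0 < ν < LZ, and let r₁ > r₂, Δ, R₀, R₁ and G(ρ₁, η₁, ·) be as in the definition of G. Set R* := (R₀r₂ − R₁)/(r₂ − r₁) + |(R₀r₁ − R₁)/(r₁ − r₂)|, H := log(ν/(LZ))/log(1 − β), and G* := LZ·D(ρ₁)/β + R*·r₁·(r₁^H − 1)/(r₁ − 1), where r₁^H denotes the real power. Then for every natural number M with 1 ≤ M ≤ H, LZ·D(ρ₁)/β + Σ_{j=1}^{M} G(ρ₁, η₁, j) ≤ G*. -/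
/-!
Since `D(ρ₁) ≥ 1` and `η₁ > 0`, the characteristic polynomial is negative at `1` and its roots
have nonnegative sum, so `r₁ > 1` and `|r₂| ≤ r₁`. As `Δ > 0`, dropping the last term of `G`
gives `G(j) ≤ R*·r₁^j` with `R* ≥ R₀ ≥ 0`; summing the geometric series and using
`r₁^M ≤ r₁^H` for `M ≤ H` yields the bound.
-/

section QuadraticRoots

variable {b c r₁ r₂ : ℝ}

theorem add_eq_of_quadratic_roots (hr : r₂ < r₁) (h₁ : r₁ ^ 2 - b * r₁ - c = 0)
    (h₂ : r₂ ^ 2 - b * r₂ - c = 0) : r₁ + r₂ = b := by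
  have h : (r₁ - r₂) * (r₁ + r₂ - b) = 0 := by linear_combination h₁ - h₂
  have := (mul_eq_zero.mp h).resolve_left (sub_ne_zero.mpr hr.ne')
  linarith

theorem quadratic_eq_mul_of_roots (hr : r₂ < r₁) (h₁ : r₁ ^ 2 - b * r₁ - c = 0)
    (h₂ : r₂ ^ 2 - b * r₂ - c = 0) (x : ℝ) : x ^ 2 - b * x - c = (x - r₁) * (x - r₂) := by
  have hsum := add_eq_of_quadratic_roots hr h₁ h₂
  linear_combination (x - r₁) * hsum + h₁

theorem lt_of_quadratic_neg (hr : r₂ < r₁) (h₁ : r₁ ^ 2 - b * r₁ - c = 0)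
    (h₂ : r₂ ^ 2 - b * r₂ - c = 0) {x : ℝ} (hx : x ^ 2 - b * x - c < 0) : x < r₁ := by
  rw [quadratic_eq_mul_of_roots hr h₁ h₂] at hx
  by_contra! h
  nlinarith

theorem abs_le_of_quadratic_roots (hb : 0 ≤ b) (hr : r₂ < r₁) (h₁ : r₁ ^ 2 - b * r₁ - c = 0)
    (h₂ : r₂ ^ 2 - b * r₂ - c = 0) : |r₂| ≤ r₁ := by
  have hsum := add_eq_of_quadratic_roots hr h₁ h₂
  exact abs_le.mpr ⟨by linarith, hr.le⟩

end QuadraticRoots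

theorem mul_pow_add_mul_pow_le {r₁ r₂ : ℝ} (hr : |r₂| ≤ r₁) (A B : ℝ) (j : ℕ) :
    A * r₁ ^ j + B * r₂ ^ j ≤ (A + |B|) * r₁ ^ j := by
  have hB : B * r₂ ^ j ≤ |B| * r₁ ^ j :=
    calc B * r₂ ^ j ≤ |B * r₂ ^ j| := le_abs_self _
      _ = |B| * |r₂| ^ j := by rw [abs_mul, abs_pow]
      _ ≤ |B| * r₁ ^ j := by gcongr
  linarith

theorem le_div_sub_add_abs_div_sub {a b : ℝ} (hab : a ≠ b) (p q : ℝ) :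
    p ≤ (p * b - q) / (b - a) + |(p * a - q) / (a - b)| := by
  have hsum : (p * b - q) / (b - a) + (p * a - q) / (a - b) = p := by
    field_simp [sub_ne_zero.mpr hab, sub_ne_zero.mpr hab.symm]
    ring
  linarith [le_abs_self ((p * a - q) / (a - b))]

theorem sum_Icc_pow_le_rpow {r H : ℝ} (hr : 1 < r) {M : ℕ} (hM : (M : ℝ) ≤ H) :
    ∑ j ∈ Finset.Icc 1 M, r ^ j ≤ r * ((r ^ H - 1) / (r - 1)) := by
  have hgeom : ∑ j ∈ Finset.Icc 1 M, r ^ j = r * ((r ^ M - 1) / (r - 1)) := by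
    rw [← Finset.Ico_add_one_right_eq_Icc, geom_sum_Ico hr.ne' (by omega)]
    ring
  have hpow : r ^ M ≤ r ^ H := by
    rw [← Real.rpow_natCast]
    exact Real.rpow_le_rpow_of_exponent_le hr.le hM
  rw [hgeom]
  have : 0 < r - 1 := by linarith
  gcongr

theorem cg_refined_upper_bound_G_general
    (L Z β : ℝ) (hL : 0 < L) (hZ : 0 < Z)
    (hβ : β ∈ Set.Ioo (0 : ℝ) 1)
    (ηl ηu : ℝ) (hηl : 0 < ηl)
    (ρ₁ : ℝ)
    (η₁ : ℝ) (hη₁ : η₁ ∈ Set.Icc ηl ηu)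
    -- the roots of the characteristic equation r² - (D(ρ₁)+η₁)r - η₁ = 0
    (r₁ r₂ : ℝ) (hr : r₂ < r₁)
    (hr₁ : r₁ ^ 2 - (max 1 (L * ρ₁ - 1) + η₁) * r₁ - η₁ = 0)
    (hr₂ : r₂ ^ 2 - (max 1 (L * ρ₁ - 1) + η₁) * r₂ - η₁ = 0)
    -- the constants and function G
    (Δ R₀ R₁ : ℝ)
    (hΔ : Δ = (max 1 (L * ρ₁ - 1) + η₁) * (1 - β) + η₁ - (1 - β) ^ 2)
    (hR₀ : R₀ = L * Z * (1 - β) ^ 2 / Δ)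
    (G : ℕ → ℝ)
    (hG : ∀ j : ℕ, G j = ((R₀ * r₂ - R₁) / (r₂ - r₁)) * r₁ ^ j +
      ((R₀ * r₁ - R₁) / (r₁ - r₂)) * r₂ ^ j - L * Z * (1 - β) ^ (j + 2) / Δ)
    -- the refined upper bound G*
    (Rstar Hb Gstar : ℝ)
    (hRstar : Rstar = (R₀ * r₂ - R₁) / (r₂ - r₁) + |(R₀ * r₁ - R₁) / (r₁ - r₂)|)
    (hGstar : Gstar = L * Z * max 1 (L * ρ₁ - 1) / β +
      Rstar * (r₁ * ((r₁ ^ Hb - 1) / (r₁ - 1)))) :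
    ∀ M : ℕ, 1 ≤ M → (M : ℝ) ≤ Hb →
      L * Z * max 1 (L * ρ₁ - 1) / β + ∑ j ∈ Finset.Icc 1 M, G j ≤ Gstar := by
  intro M _ hMH
  obtain ⟨hβ0, hβ1⟩ := hβ
  set D := max 1 (L * ρ₁ - 1)
  have hD : 1 ≤ D := le_max_left _ _
  have hη : 0 < η₁ := hηl.trans_le hη₁.1
  have hr₁_gt : 1 < r₁ := lt_of_quadratic_neg hr hr₁ hr₂ (by linarith)
  have hr₂_abs : |r₂| ≤ r₁ := abs_le_of_quadratic_roots (by linarith) hr hr₁ hr₂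
  have hΔ_pos : 0 < Δ := by
    rw [hΔ]
    nlinarith [mul_pos hβ0 (sub_pos.mpr hβ1), mul_le_mul_of_nonneg_right hD (sub_pos.mpr hβ1).le]
  -- the two coefficients of `G` sum to `R₀`, so `R* ≥ R₀`
  have hRstar_nonneg : 0 ≤ Rstar := by
    have hR₀_pos : 0 < R₀ := by rw [hR₀]; positivity
    have := le_div_sub_add_abs_div_sub hr.ne' R₀ R₁
    rw [hRstar]
    linarith
  have hG_le : ∀ j, G j ≤ Rstar * r₁ ^ j := fun j => by
    have : 0 < L * Z * (1 - β) ^ (j + 2) / Δ := by have := sub_pos.mpr hβ1; positivity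
    linarith [hG j, hRstar ▸ mul_pow_add_mul_pow_le hr₂_abs _ ((R₀ * r₁ - R₁) / (r₁ - r₂)) j]
  have hsum : ∑ j ∈ Finset.Icc 1 M, G j ≤ Rstar * (r₁ * ((r₁ ^ Hb - 1) / (r₁ - 1))) :=
    calc ∑ j ∈ Finset.Icc 1 M, G j ≤ Rstar * ∑ j ∈ Finset.Icc 1 M, r₁ ^ j := by
          rw [Finset.mul_sum]; exact Finset.sum_le_sum fun j _ => hG_le j
      _ ≤ _ := mul_le_mul_of_nonneg_left (sum_Icc_pow_le_rpow hr₁_gt hMH) hRstar_nonneg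
  rw [hGstar]
  linarith

/-- A refined upper bound for `G` (Lemma 7):
`LZ·D(ρ₁)/β + Σ_{j=1}^{M} G(ρ₁, η₁, j) ≤ G* := LZ·D(ρ₁)/β + R*·r₁·(r₁^H - 1)/(r₁ - 1)`
for every natural `M` with `1 ≤ M ≤ H` (`r₁^H` is the real power). -/
theorem cg_refined_upper_bound_G
    (L Z ν β : ℝ) (hL : 0 < L) (hZ : 0 < Z) (hν : 0 < ν) (hνLZ : ν < L * Z)
    (hβ : β ∈ Set.Ioo (0 : ℝ) 1)
    (ρl ρu ηl ηu : ℝ) (hρl : 0 < ρl) (hρlu : ρl ≤ ρu) (hηl : 0 < ηl) (hηlu : ηl ≤ ηu)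
    (ρ₁ : ℝ) (hρ₁ : ρ₁ ∈ Set.Icc ρl ρu)
    (η₁ : ℝ) (hη₁ : η₁ ∈ Set.Icc ηl ηu)
    -- the roots of the characteristic equation r² - (D(ρ₁)+η₁)r - η₁ = 0
    (r₁ r₂ : ℝ) (hr : r₂ < r₁)
    (hr₁ : r₁ ^ 2 - (max 1 (L * ρ₁ - 1) + η₁) * r₁ - η₁ = 0)
    (hr₂ : r₂ ^ 2 - (max 1 (L * ρ₁ - 1) + η₁) * r₂ - η₁ = 0)
    -- the constants and function G
    (Δ R₀ R₁ : ℝ)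
    (hΔ : Δ = (max 1 (L * ρ₁ - 1) + η₁) * (1 - β) + η₁ - (1 - β) ^ 2)
    (hR₀ : R₀ = L * Z * (1 - β) ^ 2 / Δ)
    (hR₁ : R₁ = max 1 (L * ρ₁ - 1) * L * Z / β + L * Z * (1 - β) ^ 3 / Δ)
    (G : ℕ → ℝ)
    (hG : ∀ j : ℕ, G j = ((R₀ * r₂ - R₁) / (r₂ - r₁)) * r₁ ^ j +
      ((R₀ * r₁ - R₁) / (r₁ - r₂)) * r₂ ^ j - L * Z * (1 - β) ^ (j + 2) / Δ)
    -- the refined upper bound G*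
    (Rstar Hb Gstar : ℝ)
    (hRstar : Rstar = (R₀ * r₂ - R₁) / (r₂ - r₁) + |(R₀ * r₁ - R₁) / (r₁ - r₂)|)
    (hHb : Hb = Real.log (ν / (L * Z)) / Real.log (1 - β))
    (hGstar : Gstar = L * Z * max 1 (L * ρ₁ - 1) / β +
      Rstar * (r₁ * ((r₁ ^ Hb - 1) / (r₁ - 1)))) :
    ∀ M : ℕ, 1 ≤ M → (M : ℝ) ≤ Hb →
      L * Z * max 1 (L * ρ₁ - 1) / β + ∑ j ∈ Finset.Icc 1 M, G j ≤ Gstar :=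
  cg_refined_upper_bound_G_general L Z β hL hZ hβ ηl ηu hηl ρ₁ η₁ hη₁ r₁ r₂ hr hr₁ hr₂ Δ R₀ R₁ hΔ
    hR₀ G hG Rstar Hb Gstar hRstar hGstar
end

section
/- Let ρ₁ ∈ [ρ_l, ρ_u] ⊂ (0, ∞), η₁ ∈ [η_l, η_u] ⊂ (0, ∞) with L < η_l, β ∈ (0, 1), L > 0, Z > 0, ν with 0 < ν < LZ, and let r₁ > r₂, F(η*), R₀, R₁ and H(η*, ρ₁, ·) be as in the definition of H. Set R*' := (R₀r₂ − R₁)/(r₂ − r₁) + |(R₀r₁ − R₁)/(r₁ − r₂)|, H := log(ν/(LZ))/log(1 − β), and H* := R*'·r₁·(r₁^H − 1)/(r₁ − 1), where r₁^H denotes the real power. Then for every natural number M with 1 ≤ M ≤ H, Σ_{j=1}^{M} H(η*, ρ₁, j) ≤ H*. -/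
/-!
By Vieta, `r₁ + r₂ = D(ρ₁) + η₁ ≥ 1` and `r₁ r₂ = -η₁ < 0`, so `r₂ < 0`, `r₁ > 1` and `|r₂| ≤ r₁`.
Hence `H(j) ≤ R*' r₁^j`, once the constant term `-F/(D(ρ₁) + 2η₁ - 1) ≤ 0` is dropped.
`F ≥ ρ₁LZ > 0` (the value at `n = 0`) makes `R₀, R₁ ≥ 0` and thus `R*' ≥ 0`, so summing the
geometric series and using `r₁^M ≤ r₁^H` gives the bound.
-/

lemma quadratic_roots_add_mul {p q r₁ r₂ : ℝ} (hne : r₁ ≠ r₂)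
    (h₁ : r₁ ^ 2 - p * r₁ - q = 0) (h₂ : r₂ ^ 2 - p * r₂ - q = 0) :
    r₁ + r₂ = p ∧ r₁ * r₂ = -q := by
  have hsum : r₁ + r₂ = p := by
    have : (r₁ - r₂) * (r₁ + r₂ - p) = 0 := by linear_combination h₁ - h₂
    linarith [(mul_eq_zero.1 this).resolve_left (sub_ne_zero.2 hne)]
  exact ⟨hsum, by linear_combination -h₂ + r₂ * hsum⟩

lemma quadratic_roots_bounds {p q r₁ r₂ : ℝ} (hp : 1 ≤ p) (hq : 0 < q) (hr : r₂ < r₁)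
    (h₁ : r₁ ^ 2 - p * r₁ - q = 0) (h₂ : r₂ ^ 2 - p * r₂ - q = 0) :
    r₂ < 0 ∧ 1 < r₁ ∧ |r₂| ≤ r₁ := by
  obtain ⟨hsum, hprod⟩ := quadratic_roots_add_mul hr.ne' h₁ h₂
  have hr₂ : r₂ < 0 := by nlinarith
  refine ⟨hr₂, by linarith, ?_⟩
  rw [abs_of_neg hr₂]
  linarith

lemma mul_pow_add_mul_pow_le_of_abs_le (a b : ℝ) {x y : ℝ} (hxy : |y| ≤ x) (j : ℕ) :
    a * x ^ j + b * y ^ j ≤ (a + |b|) * x ^ j := by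
  have : b * y ^ j ≤ |b| * x ^ j :=
    calc b * y ^ j ≤ |b * y ^ j| := le_abs_self _
      _ = |b| * |y| ^ j := by rw [abs_mul, abs_pow]
      _ ≤ |b| * x ^ j := by gcongr
  linarith

lemma sum_Icc_one_pow_le_of_le_rpow {r t : ℝ} (hr : 1 < r) {M : ℕ} (hM : (M : ℝ) ≤ t) :
    ∑ j ∈ Finset.Icc 1 M, r ^ j ≤ r * ((r ^ t - 1) / (r - 1)) := by
  have hsum : ∑ j ∈ Finset.Icc 1 M, r ^ j = r * ((r ^ M - 1) / (r - 1)) := by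
    rw [← Finset.Ico_add_one_right_eq_Icc, Finset.sum_Ico_eq_sum_range, ← geom_sum_eq hr.ne',
      Finset.mul_sum]
    simp [pow_succ', add_comm]
  have hpow : r ^ M ≤ r ^ t := by
    rw [← Real.rpow_natCast]
    exact Real.rpow_le_rpow_of_exponent_le hr.le hM
  rw [hsum]
  gcongr

theorem cg_refined_upper_bound_H_general
    (L Z : ℝ) (hL : 0 < L) (hZ : 0 < Z)
    (ρl ρu ηl ηu : ℝ) (hρl : 0 < ρl) (hηl : 0 < ηl)
    (ρ₁ : ℝ) (hρ₁ : ρ₁ ∈ Set.Icc ρl ρu)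
    (η₁ : ℝ) (hη₁ : η₁ ∈ Set.Icc ηl ηu)
    -- the roots of the characteristic equation r² - (D(ρ₁)+η₁)r - η₁ = 0
    (r₁ r₂ : ℝ) (hr : r₂ < r₁)
    (hr₁ : r₁ ^ 2 - (max 1 (L * ρ₁ - 1) + η₁) * r₁ - η₁ = 0)
    (hr₂ : r₂ ^ 2 - (max 1 (L * ρ₁ - 1) + η₁) * r₂ - η₁ = 0)
    (Hb : ℝ)
    -- the constants and function H
    (F : ℝ)
    (hF : IsGreatest {x : ℝ | ∃ n : ℕ, (n : ℝ) < Hb ∧ ∃ η ∈ Set.Icc ηl ηu,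
      x = η ^ n * (ρ₁ * L * Z + ρ₁ * Z * L / (η - L)) - (ρ₁ * Z / (η - L)) * L ^ (n + 1)} F)
    (R₀ R₁ : ℝ)
    (hR₀ : R₀ = F / (max 1 (L * ρ₁ - 1) + 2 * η₁ - 1))
    (hR₁ : R₁ = F / η₁ * (1 + 1 / (max 1 (L * ρ₁ - 1) + 2 * η₁ - 1)))
    (H : ℕ → ℝ)
    (hH : ∀ j : ℕ, H j = ((R₀ * r₂ - R₁) / (r₂ - r₁)) * r₁ ^ j +
      ((R₀ * r₁ - R₁) / (r₁ - r₂)) * r₂ ^ j -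
      F / (max 1 (L * ρ₁ - 1) + 2 * η₁ - 1))
    -- the refined upper bound H*
    (Rstar' Hstar : ℝ)
    (hRstar' : Rstar' = (R₀ * r₂ - R₁) / (r₂ - r₁) + |(R₀ * r₁ - R₁) / (r₁ - r₂)|)
    (hHstar : Hstar = Rstar' * (r₁ * ((r₁ ^ Hb - 1) / (r₁ - 1)))) :
    ∀ M : ℕ, 1 ≤ M → (M : ℝ) ≤ Hb →
      ∑ j ∈ Finset.Icc 1 M, H j ≤ Hstar := by
  intro M hM hMHb
  have hρ₁pos : 0 < ρ₁ := hρl.trans_le hρ₁.1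
  have hη₁pos : 0 < η₁ := hηl.trans_le hη₁.1
  have hD : 1 ≤ max 1 (L * ρ₁ - 1) := le_max_left _ _
  obtain ⟨hr₂neg, hr₁gt, habs⟩ := quadratic_roots_bounds (by linarith) hη₁pos hr hr₁ hr₂
  have hF₀ : 0 ≤ F := by
    have hHb : (0 : ℝ) < Hb := by linarith [show (1 : ℝ) ≤ M by exact_mod_cast hM]
    exact (by positivity : 0 ≤ ρ₁ * L * Z).trans
      (hF.2 ⟨0, by simpa using hHb, η₁, hη₁, by ring⟩)
  have hden : 0 < max 1 (L * ρ₁ - 1) + 2 * η₁ - 1 := by linarith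
  have hconst : 0 ≤ F / (max 1 (L * ρ₁ - 1) + 2 * η₁ - 1) := div_nonneg hF₀ hden.le
  have hR₀ : 0 ≤ R₀ := hR₀ ▸ hconst
  have hR₁ : 0 ≤ R₁ := hR₁ ▸ mul_nonneg (div_nonneg hF₀ hη₁pos.le)
    (by linarith [one_div_pos.2 hden])
  have hA : 0 ≤ (R₀ * r₂ - R₁) / (r₂ - r₁) := div_nonneg_of_nonpos (by nlinarith) (by linarith)
  have hterm (j : ℕ) : H j ≤ Rstar' * r₁ ^ j := by
    rw [hH, hRstar']
    linarith [mul_pow_add_mul_pow_le_of_abs_le ((R₀ * r₂ - R₁) / (r₂ - r₁))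
      ((R₀ * r₁ - R₁) / (r₁ - r₂)) habs j]
  calc ∑ j ∈ Finset.Icc 1 M, H j ≤ ∑ j ∈ Finset.Icc 1 M, Rstar' * r₁ ^ j :=
        Finset.sum_le_sum fun j _ => hterm j
    _ = Rstar' * ∑ j ∈ Finset.Icc 1 M, r₁ ^ j := (Finset.mul_sum ..).symm
    _ ≤ Hstar := hHstar ▸ mul_le_mul_of_nonneg_left (sum_Icc_one_pow_le_of_le_rpow hr₁gt hMHb)
        (hRstar' ▸ add_nonneg hA (abs_nonneg _))

/-- A refined upper bound for `H` (Lemma 8):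
`Σ_{j=1}^{M} H(η*, ρ₁, j) ≤ H* := R*'·r₁·(r₁^H - 1)/(r₁ - 1)`
for every natural `M` with `1 ≤ M ≤ H` (`r₁^H` is the real power). -/
theorem cg_refined_upper_bound_H
    (L Z ν β : ℝ) (hL : 0 < L) (hZ : 0 < Z) (hν : 0 < ν) (hνLZ : ν < L * Z)
    (hβ : β ∈ Set.Ioo (0 : ℝ) 1)
    (ρl ρu ηl ηu : ℝ) (hρl : 0 < ρl) (hρlu : ρl ≤ ρu) (hηl : 0 < ηl) (hηlu : ηl ≤ ηu)
    (hLη : L < ηl)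
    (ρ₁ : ℝ) (hρ₁ : ρ₁ ∈ Set.Icc ρl ρu)
    (η₁ : ℝ) (hη₁ : η₁ ∈ Set.Icc ηl ηu)
    -- the roots of the characteristic equation r² - (D(ρ₁)+η₁)r - η₁ = 0
    (r₁ r₂ : ℝ) (hr : r₂ < r₁)
    (hr₁ : r₁ ^ 2 - (max 1 (L * ρ₁ - 1) + η₁) * r₁ - η₁ = 0)
    (hr₂ : r₂ ^ 2 - (max 1 (L * ρ₁ - 1) + η₁) * r₂ - η₁ = 0)
    (Hb : ℝ) (hHb : Hb = Real.log (ν / (L * Z)) / Real.log (1 - β))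
    -- the constants and function H
    (F : ℝ)
    (hF : IsGreatest {x : ℝ | ∃ n : ℕ, (n : ℝ) < Hb ∧ ∃ η ∈ Set.Icc ηl ηu,
      x = η ^ n * (ρ₁ * L * Z + ρ₁ * Z * L / (η - L)) - (ρ₁ * Z / (η - L)) * L ^ (n + 1)} F)
    (R₀ R₁ : ℝ)
    (hR₀ : R₀ = F / (max 1 (L * ρ₁ - 1) + 2 * η₁ - 1))
    (hR₁ : R₁ = F / η₁ * (1 + 1 / (max 1 (L * ρ₁ - 1) + 2 * η₁ - 1)))
    (H : ℕ → ℝ)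
    (hH : ∀ j : ℕ, H j = ((R₀ * r₂ - R₁) / (r₂ - r₁)) * r₁ ^ j +
      ((R₀ * r₁ - R₁) / (r₁ - r₂)) * r₂ ^ j -
      F / (max 1 (L * ρ₁ - 1) + 2 * η₁ - 1))
    -- the refined upper bound H*
    (Rstar' Hstar : ℝ)
    (hRstar' : Rstar' = (R₀ * r₂ - R₁) / (r₂ - r₁) + |(R₀ * r₁ - R₁) / (r₁ - r₂)|)
    (hHstar : Hstar = Rstar' * (r₁ * ((r₁ ^ Hb - 1) / (r₁ - 1)))) :
    ∀ M : ℕ, 1 ≤ M → (M : ℝ) ≤ Hb →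
      ∑ j ∈ Finset.Icc 1 M, H j ≤ Hstar :=
  cg_refined_upper_bound_H_general L Z hL hZ ρl ρu ηl ηu hρl hηl ρ₁ hρ₁ η₁ hη₁ r₁ r₂ hr hr₁ hr₂ Hb F
    hF R₀ R₁ hR₀ hR₁ H hH Rstar' Hstar hRstar' hHstar
end
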